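/- arXiv:1703.09378 — 4 statements merged into one kernel-verified Lean document; each statement's English description precedes it below -/
import Mathlib

section
/- Let k ≥ 2 and n ≥ 3 be integers and let C_n be the cycle graph on n vertices. (i) If n ≤ 2k−2, then C_n is not k-color connectable. (ii) If n = 2k−1, then cc_k(C_n) = 2k−1. (iii) If n ≥ 2k, then cc_k(C_n) = k. -/
open SimpleGraph

/-- `c` is a `k`-color connecting edge-coloring of `G`: between every pair of distinct
vertices there is a path whose edges use at least `k` different colors. -/
def SimpleGraph.IsKColorConnecting {V : Type*} (G : SimpleGraph V) (k : ℕ)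
    (c : Sym2 V → ℕ) : Prop :=
  ∀ u v : V, u ≠ v → ∃ p : G.Walk u v, p.IsPath ∧ k ≤ (p.edges.map c).toFinset.card

/-- `G` is `k`-color connectable: it admits a `k`-color connecting coloring. -/
def SimpleGraph.KColorConnectable {V : Type*} (G : SimpleGraph V) (k : ℕ) : Prop :=
  ∃ c : Sym2 V → ℕ, G.IsKColorConnecting k c

/-- The `k`-color connection number `cc_k(G)`: the minimum number of colors used on the
edges of `G` by a `k`-color connecting coloring. -/
noncomputable def SimpleGraph.ccConn {V : Type*} (G : SimpleGraph V) (k : ℕ) : ℕ :=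
  sInf {n : ℕ | ∃ c : Sym2 V → ℕ, G.IsKColorConnecting k c ∧ (c '' G.edgeSet).ncard = n}

/-!
Between two distinct vertices `u`, `v` of `C_n` there are exactly two paths: the two arcs,
with `d` and `n - d` edges. A path never shows more colours than it has edges.
If `n ≤ 2k - 2`, a pair at distance `min (k - 1) (n - 1)` has both arcs shorter than `k`.
If `n = 2k - 1`, any two edges lie on an arc of `k` edges whose complementary arc has only
`k - 1` edges, so all edges need distinct colours; and distinct colours suffice, since one of
the two arcs always has at least `k` edges.
If `n ≥ 2k`, colour edge `s(i, i + 1)` by `i mod k`. For `u < v`, either the arc from `u` to `v`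
contains `k` consecutive indices, or the arc from `v` back to `u` contains the indices in `[0, u)`
and in `[u + k, 2k)`, which together meet every residue class.
-/

open Fin.NatCast Fin.CommRing

lemma Fin.val_sub_add_val_sub {N : ℕ} {u v : Fin N} (huv : u ≠ v) :
    (u - v).val + (v - u).val = N := by
  rcases huv.lt_or_gt with h | h
  · rw [Fin.coe_sub_iff_lt.mpr h, Fin.coe_sub_iff_le.mpr h.le]
    omega
  · rw [Fin.coe_sub_iff_le.mpr h.le, Fin.coe_sub_iff_lt.mpr h]
    omega

namespace SimpleGraph

section Colorings

variable {V : Type*} {G : SimpleGraph V} {k : ℕ} {c : Sym2 V → ℕ}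

namespace Walk

variable {u v : V}

lemma card_colors_le_length (p : G.Walk u v) (c : Sym2 V → ℕ) :
    (p.edges.map c).toFinset.card ≤ p.length :=
  (List.toFinset_card_le _).trans (by simp)

lemma IsPath.card_colors_eq_length {p : G.Walk u v} (hp : p.IsPath) (hc : c.Injective) :
    (p.edges.map c).toFinset.card = p.length := by
  rw [List.toFinset_card_of_nodup (hp.edges_nodup.map hc), List.length_map, length_edges]

lemma card_colors_lt_length (p : G.Walk u v) {e₁ e₂ : Sym2 V} (h₁ : e₁ ∈ p.edges)
    (h₂ : e₂ ∈ p.edges) (hne : e₁ ≠ e₂) (hc : c e₁ = c e₂) :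
    (p.edges.map c).toFinset.card < p.length := by
  classical
  have hnotInj : ¬ Set.InjOn c p.edges.toFinset := fun hinj =>
    hne (hinj (by simpa using h₁) (by simpa using h₂) hc)
  calc (p.edges.map c).toFinset.card = (p.edges.toFinset.image c).card := by
        congr 1
        ext
        simp
    _ < p.edges.toFinset.card :=
        lt_of_le_of_ne Finset.card_image_le (mt Finset.card_image_iff.mp hnotInj)
    _ ≤ p.length := (List.toFinset_card_le _).trans (by simp)

end Walk

lemma isKColorConnecting_of_forall_lt [LinearOrder V]
    (h : ∀ u v : V, u < v → ∃ p : G.Walk u v, p.IsPath ∧ k ≤ (p.edges.map c).toFinset.card) :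
    G.IsKColorConnecting k c := by
  intro u v huv
  rcases huv.lt_or_gt with huv | hvu
  · exact h u v huv
  · obtain ⟨p, hp, hk⟩ := h v u hvu
    exact ⟨p.reverse, hp.reverse, by simpa [Walk.edges_reverse] using hk⟩

lemma IsKColorConnecting.le_ncard_image [Finite V] [Nontrivial V]
    (hc : G.IsKColorConnecting k c) : k ≤ (c '' G.edgeSet).ncard := by
  obtain ⟨u, v, huv⟩ := exists_pair_ne V
  obtain ⟨p, -, hk⟩ := hc u v huv
  refine hk.trans ?_
  rw [← Set.ncard_coe_finset]
  refine Set.ncard_le_ncard (fun x hx => ?_) (Set.toFinite _)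
  obtain ⟨e, he, rfl⟩ := List.mem_map.mp (List.mem_toFinset.mp hx)
  exact ⟨e, p.edges_subset_edgeSet he, rfl⟩

lemma ccConn_eq_of_forall_le (hc : G.IsKColorConnecting k c)
    (hmin : ∀ c', G.IsKColorConnecting k c' →
      (c '' G.edgeSet).ncard ≤ (c' '' G.edgeSet).ncard) :
    G.ccConn k = (c '' G.edgeSet).ncard :=
  le_antisymm (Nat.sInf_le ⟨c, hc, rfl⟩)
    (le_csInf ⟨_, c, hc, rfl⟩ fun _ ⟨c', hc', h⟩ => h ▸ hmin c' hc')

end Colorings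

section Cycle

variable {n : ℕ}

lemma cycleGraph_adj_add_one (u : Fin (n + 2)) : (cycleGraph (n + 2)).Adj u (u + 1) :=
  cycleGraph_adj.mpr (Or.inr (by simp))

lemma cycleGraph_sub_eq_sub_of_adj {u v w : Fin (n + 2)} (huv : (cycleGraph (n + 2)).Adj u v)
    (hvw : (cycleGraph (n + 2)).Adj v w) (hwu : w ≠ u) : w - v = v - u := by
  rw [cycleGraph_adj] at huv hvw
  rcases huv with h | h <;> rcases hvw with h' | h' <;> grind

lemma cycleGraph_edgeSet :
    (cycleGraph (n + 2)).edgeSet = Set.range fun w : Fin (n + 2) => s(w, w + 1) := by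
  ext e
  induction e with
  | h a b =>
    rw [mem_edgeSet, cycleGraph_adj, Set.mem_range]
    constructor
    · rintro (h | h)
      · exact ⟨b, Sym2.eq_swap.trans (by rw [← h]; ring_nf)⟩
      · exact ⟨a, by rw [← h]; ring_nf⟩
    · rintro ⟨w, hw⟩
      rcases Sym2.eq_iff.mp hw with ⟨rfl, rfl⟩ | ⟨rfl, rfl⟩ <;> simp

lemma cycleGraph_edge_injective : (fun w : Fin (n + 3) => s(w, w + 1)).Injective := by
  intro a b h
  rcases Sym2.eq_iff.mp h with ⟨h, -⟩ | ⟨h₁, h₂⟩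
  · exact h
  · have : (2 : Fin (n + 3)) = 0 := by grind
    simp [Fin.ext_iff, Nat.mod_eq_of_lt] at this

lemma cycleGraph_ncard_edgeSet : (cycleGraph (n + 3)).edgeSet.ncard = n + 3 := by
  rw [cycleGraph_edgeSet, Set.ncard_range_of_injective cycleGraph_edge_injective,
    Nat.card_eq_fintype_card, Fintype.card_fin]

lemma cycleGraph_getVert_eq_add_mul {u v : Fin (n + 2)} {p : (cycleGraph (n + 2)).Walk u v}
    (hp : p.IsPath) {i : ℕ} (hi : i ≤ p.length) :
    p.getVert i = u + i * (p.getVert 1 - u) := by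
  have hstep : ∀ j < p.length, p.getVert (j + 1) - p.getVert j = p.getVert 1 - u := by
    intro j hj
    induction j with
    | zero => simp
    | succ j ih =>
      rw [← ih (by omega)]
      refine cycleGraph_sub_eq_sub_of_adj (p.adj_getVert_succ (by omega)) (p.adj_getVert_succ hj)
        fun h => ?_
      have := hp.getVert_injOn (by simp; omega) (by simp; omega) h
      omega
  induction i with
  | zero => simp
  | succ i ih =>
    rw [← sub_add_cancel (p.getVert (i + 1)) (p.getVert i), hstep i (by omega), ih (by omega)]
    push_cast
    ring

lemma cycleGraph_path_forward_or_length_eq {u v : Fin (n + 2)}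
    {p : (cycleGraph (n + 2)).Walk u v} (hp : p.IsPath) :
    (p.length = (v - u).val ∧ ∀ i ≤ p.length, p.getVert i = u + i) ∨
      p.length = (u - v).val := by
  have hlt : p.length < n + 2 := by simpa using hp.length_lt
  have hv : v = u + p.length * (p.getVert 1 - u) := by
    rw [← cycleGraph_getVert_eq_add_mul hp le_rfl, p.getVert_length]
  rcases Nat.eq_zero_or_pos p.length with h0 | hpos
  · obtain rfl := p.eq_of_length_eq_zero h0
    left
    refine ⟨by simp [h0], fun i hi => ?_⟩
    obtain rfl : i = 0 := by omega
    simp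
  have hcast : ((p.length : Fin (n + 2)) : ℕ) = p.length := by
    rw [Fin.val_natCast, Nat.mod_eq_of_lt hlt]
  rcases cycleGraph_adj.mp (p.adj_getVert_succ hpos) with h | h <;>
    rw [zero_add, p.getVert_zero] at h
  · right
    have : u - v = p.length := by linear_combination -hv + (p.length : Fin (n + 2)) * h
    rw [this, hcast]
  · left
    have : v - u = p.length := by linear_combination hv + (p.length : Fin (n + 2)) * h
    refine ⟨by rw [this, hcast], fun i hi => ?_⟩
    rw [cycleGraph_getVert_eq_add_mul hp hi, h, mul_one]

lemma cycleGraph_exists_walk_getVert_eq_add (u : Fin (n + 2)) (ℓ : ℕ) :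
    ∃ p : (cycleGraph (n + 2)).Walk u (u + ℓ), p.length = ℓ ∧ ∀ i ≤ ℓ, p.getVert i = u + i := by
  induction ℓ generalizing u with
  | zero =>
    refine ⟨Walk.nil.copy rfl (by simp), by simp, fun i hi => ?_⟩
    obtain rfl : i = 0 := by omega
    simp
  | succ ℓ ih =>
    obtain ⟨q, hlen, hq⟩ := ih (u + 1)
    refine ⟨(Walk.cons (cycleGraph_adj_add_one u) q).copy rfl (by push_cast; ring),
      by simp [hlen], fun i hi => ?_⟩
    cases i with
    | zero => simp
    | succ i =>
      rw [Walk.getVert_copy, Walk.getVert_cons_succ, hq i (by omega)]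
      push_cast
      ring

lemma cycleGraph_exists_path_getVert_eq_add (u v : Fin (n + 2)) :
    ∃ p : (cycleGraph (n + 2)).Walk u v, p.IsPath ∧ p.length = (v - u).val ∧
      ∀ i ≤ p.length, p.getVert i = u + i := by
  obtain ⟨p, hlen, hp⟩ := cycleGraph_exists_walk_getVert_eq_add u (v - u).val
  have hv : u + ((v - u).val : Fin (n + 2)) = v := by simp
  refine ⟨p.copy rfl hv, ?_, by simpa using hlen, by simpa [hlen] using hp⟩
  rw [Walk.isPath_copy, ← Walk.IsPath.getVert_injOn_iff, hlen]
  intro i hi j hj hij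
  simp only [Set.mem_ofPred_eq] at hi hj
  rw [hp i hi, hp j hj] at hij
  have := congrArg Fin.val (add_left_cancel hij)
  have hlt := (v - u).isLt
  rwa [Fin.val_natCast, Fin.val_natCast, Nat.mod_eq_of_lt (by omega),
    Nat.mod_eq_of_lt (by omega)] at this

lemma cycleGraph_mk_add_mem_edges {u v : Fin (n + 2)} {p : (cycleGraph (n + 2)).Walk u v}
    (hp : ∀ i ≤ p.length, p.getVert i = u + i) {i : ℕ} (hi : i < p.length) :
    s(u + i, u + i + 1) ∈ p.edges :=
  p.mk_mem_edges_iff_exists.mpr ⟨i, hi, by rw [hp i hi.le, hp (i + 1) hi]; push_cast; ring_nf⟩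

theorem cycleGraph_not_kColorConnectable {k : ℕ} (hn : n + 2 ≤ 2 * k - 2) :
    ¬ (cycleGraph (n + 2)).KColorConnectable k := by
  rintro ⟨c, hc⟩
  set d := min (k - 1) (n + 1)
  have hd : ((d : Fin (n + 2)) : ℕ) = d := by rw [Fin.val_natCast, Nat.mod_eq_of_lt (by omega)]
  have hne : (0 : Fin (n + 2)) ≠ d := fun h => by
    have := congrArg Fin.val h
    rw [hd] at this
    simp at this
    omega
  obtain ⟨p, hp, hk⟩ := hc 0 d hne
  have hsum := Fin.val_sub_add_val_sub hne
  have := p.card_colors_le_length c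
  rcases cycleGraph_path_forward_or_length_eq hp with ⟨hl, -⟩ | hl <;>
    simp only [sub_zero, zero_sub, hd] at hl hsum <;> omega

theorem cycleGraph_isKColorConnecting_of_injective {k : ℕ} {c : Sym2 (Fin (n + 2)) → ℕ}
    (hc : c.Injective) (hn : 2 * k - 1 ≤ n + 2) :
    (cycleGraph (n + 2)).IsKColorConnecting k c := by
  intro u v huv
  have hsum := Fin.val_sub_add_val_sub huv
  by_cases hk : k ≤ (v - u).val
  · obtain ⟨p, hp, hlen, -⟩ := cycleGraph_exists_path_getVert_eq_add u v
    exact ⟨p, hp, by rwa [hp.card_colors_eq_length hc, hlen]⟩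
  · obtain ⟨p, hp, hlen, -⟩ := cycleGraph_exists_path_getVert_eq_add v u
    refine ⟨p.reverse, hp.reverse, ?_⟩
    rw [hp.reverse.card_colors_eq_length hc, Walk.length_reverse, hlen]
    omega

/- The edges at `x` and `x + g` both lie on the arc of `k` edges from `x` to `x + k`, so that arc
shows fewer than `k` colours, and the other arc has only `k - 1` edges. -/
lemma cycleGraph_color_ne_of_isKColorConnecting {k : ℕ} {c : Sym2 (Fin (n + 3)) → ℕ}
    (hn : n + 3 = 2 * k - 1) (hc : (cycleGraph (n + 3)).IsKColorConnecting k c)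
    (x : Fin (n + 3)) {g : ℕ} (hg : 0 < g) (hgk : g < k) :
    c s(x, x + 1) ≠ c s(x + g, x + g + 1) := by
  intro hcol
  have hk : ((k : Fin (n + 3)) : ℕ) = k := by rw [Fin.val_natCast, Nat.mod_eq_of_lt (by omega)]
  have hne : x ≠ x + k := fun h => by
    have := congrArg Fin.val (left_eq_add.mp h)
    rw [hk] at this
    simp at this
    omega
  obtain ⟨p, hp, hcolors⟩ := hc x (x + k) hne
  rcases cycleGraph_path_forward_or_length_eq hp with ⟨hl, hfwd⟩ | hl
  · rw [add_sub_cancel_left, hk] at hl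
    have h₁ := cycleGraph_mk_add_mem_edges hfwd (i := 0) (by omega)
    have h₂ := cycleGraph_mk_add_mem_edges hfwd (i := g) (by omega)
    have hg' : x + ((0 : ℕ) : Fin (n + 3)) ≠ x + g := by
      rw [Ne, add_right_inj, Fin.ext_iff, Fin.val_natCast, Fin.val_natCast,
        Nat.mod_eq_of_lt (by omega), Nat.mod_eq_of_lt (by omega)]
      omega
    have := p.card_colors_lt_length h₁ h₂ (cycleGraph_edge_injective.ne hg') (by simpa using hcol)
    omega
  · have hsum := Fin.val_sub_add_val_sub hne
    have := p.card_colors_le_length c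
    rw [add_sub_cancel_left, hk] at hsum
    omega

lemma cycleGraph_injOn_of_isKColorConnecting {k : ℕ} {c : Sym2 (Fin (n + 3)) → ℕ}
    (hn : n + 3 = 2 * k - 1) (hc : (cycleGraph (n + 3)).IsKColorConnecting k c) :
    Set.InjOn c (cycleGraph (n + 3)).edgeSet := by
  rw [cycleGraph_edgeSet]
  rintro _ ⟨x, rfl⟩ _ ⟨y, rfl⟩ hxy
  by_contra hne
  have hsum := Fin.val_sub_add_val_sub (fun h : x = y => hne (h ▸ rfl))
  by_cases hg : (y - x).val < k
  · refine cycleGraph_color_ne_of_isKColorConnecting hn hc x (g := (y - x).val) ?_ hg ?_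
    · omega
    · simpa using hxy
  · refine cycleGraph_color_ne_of_isKColorConnecting hn hc y (g := (x - y).val) ?_ (by omega) ?_
    · omega
    · simpa using hxy.symm

/-- Colours the edge `s(w, w + 1)` by `w % k` (elements of `Sym2` that are not edges of the cycle
get meaningless colours). -/
noncomputable def cycleGraphModColoring (n k : ℕ) (e : Sym2 (Fin (n + 3))) : ℕ :=
  (Function.invFun (fun w : Fin (n + 3) => s(w, w + 1)) e).val % k

lemma cycleGraphModColoring_mk {k : ℕ} (w : Fin (n + 3)) :
    cycleGraphModColoring n k s(w, w + 1) = w.val % k := by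
  rw [cycleGraphModColoring, Function.leftInverse_invFun cycleGraph_edge_injective w]

lemma cycleGraphModColoring_mem_colors {k : ℕ} {u v : Fin (n + 3)}
    {p : (cycleGraph (n + 3)).Walk u v} (hp : ∀ i ≤ p.length, p.getVert i = u + i) {i : ℕ}
    (hi : i < p.length) :
    (u.val + i) % (n + 3) % k ∈ (p.edges.map (cycleGraphModColoring n k)).toFinset := by
  refine List.mem_toFinset.mpr (List.mem_map.mpr ⟨_, cycleGraph_mk_add_mem_edges hp hi, ?_⟩)
  rw [cycleGraphModColoring_mk, Fin.val_add, Fin.val_natCast, Nat.add_mod_mod]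

lemma cycleGraph_le_card_modColoring_of_add_le {k : ℕ} {u v : Fin (n + 3)}
    {p : (cycleGraph (n + 3)).Walk u v} (hp : ∀ i ≤ p.length, p.getVert i = u + i)
    (hlen : p.length = (v - u).val) (huv : u.val + k ≤ v.val) :
    k ≤ (p.edges.map (cycleGraphModColoring n k)).toFinset.card := by
  rw [Fin.coe_sub_iff_le.mpr (by rw [Fin.le_iff_val_le_val]; omega)] at hlen
  have hv := v.isLt
  calc k = (Finset.range k).card := (Finset.card_range k).symm
    _ ≤ _ := Finset.card_le_card_of_injOn (fun i => (u.val + i) % k) (fun i hi => by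
        have hi : i < k := Finset.mem_range.mp hi
        simpa [Nat.mod_eq_of_lt (show u.val + i < n + 3 by omega)] using
          cycleGraphModColoring_mem_colors hp (i := i) (by omega))
      fun i hi j hj hij => (Nat.ModEq.add_left_cancel' _ hij).eq_of_lt_of_lt
        (Finset.mem_range.mp hi) (Finset.mem_range.mp hj)

lemma cycleGraph_le_card_modColoring_of_lt_add {k : ℕ} (hn : 2 * k ≤ n + 3) {u v : Fin (n + 3)}
    {p : (cycleGraph (n + 3)).Walk v u} (hp : ∀ i ≤ p.length, p.getVert i = v + i)
    (hlen : p.length = (u - v).val) (huv : u.val < v.val) (hvu : v.val < u.val + k) :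
    k ≤ (p.edges.map (cycleGraphModColoring n k)).toFinset.card := by
  rw [Fin.coe_sub_iff_lt.mpr (Fin.lt_def.mpr huv)] at hlen
  have hv := v.isLt
  refine (Finset.card_range k).symm.le.trans (Finset.card_le_card fun r hr => ?_)
  have hr : r < k := Finset.mem_range.mp hr
  by_cases hru : r < u.val
  · have := cycleGraphModColoring_mem_colors (k := k) hp (i := n + 3 - v.val + r) (by omega)
    rwa [show v.val + (n + 3 - v.val + r) = r + (n + 3) by omega, Nat.add_mod_right,
      Nat.mod_eq_of_lt (show r < n + 3 by omega), Nat.mod_eq_of_lt hr] at this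
  · have := cycleGraphModColoring_mem_colors (k := k) hp (i := r + k - v.val) (by omega)
    rwa [show v.val + (r + k - v.val) = r + k by omega,
      Nat.mod_eq_of_lt (show r + k < n + 3 by omega), Nat.add_mod_right,
      Nat.mod_eq_of_lt hr] at this

theorem cycleGraph_isKColorConnecting_modColoring {k : ℕ} (hn : 2 * k ≤ n + 3) :
    (cycleGraph (n + 3)).IsKColorConnecting k (cycleGraphModColoring n k) := by
  refine isKColorConnecting_of_forall_lt fun u v huv => ?_
  rw [Fin.lt_def] at huv
  by_cases h : u.val + k ≤ v.val
  · obtain ⟨p, hp, hlen, hfwd⟩ := cycleGraph_exists_path_getVert_eq_add u v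
    exact ⟨p, hp, cycleGraph_le_card_modColoring_of_add_le hfwd hlen h⟩
  · obtain ⟨p, hp, hlen, hfwd⟩ := cycleGraph_exists_path_getVert_eq_add v u
    refine ⟨p.reverse, hp.reverse, ?_⟩
    rw [Walk.edges_reverse, List.map_reverse, List.toFinset_reverse]
    exact cycleGraph_le_card_modColoring_of_lt_add hn hfwd hlen huv (by omega)

lemma cycleGraph_ncard_image_modColoring {k : ℕ} (hk : 0 < k) (hn : k ≤ n + 3) :
    (cycleGraphModColoring n k '' (cycleGraph (n + 3)).edgeSet).ncard = k := by
  suffices cycleGraphModColoring n k '' (cycleGraph (n + 3)).edgeSet = Set.Iio k by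
    rw [this, ← Finset.coe_range, Set.ncard_coe_finset, Finset.card_range]
  rw [cycleGraph_edgeSet, ← Set.range_comp]
  ext r
  simp only [Set.mem_range, Function.comp_apply, cycleGraphModColoring_mk, Set.mem_Iio]
  exact ⟨fun ⟨w, hw⟩ => hw ▸ Nat.mod_lt _ hk, fun hr => ⟨⟨r, by omega⟩, Nat.mod_eq_of_lt hr⟩⟩

end Cycle

end SimpleGraph

theorem stmt_0 (k n : ℕ) (hk : 2 ≤ k) (hn : 3 ≤ n) :
    (n ≤ 2 * k - 2 → ¬ (cycleGraph n).KColorConnectable k) ∧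
    (n = 2 * k - 1 → (cycleGraph n).KColorConnectable k ∧
      (cycleGraph n).ccConn k = 2 * k - 1) ∧
    (2 * k ≤ n → (cycleGraph n).KColorConnectable k ∧ (cycleGraph n).ccConn k = k) := by
  obtain ⟨n, rfl⟩ : ∃ m, n = m + 3 := ⟨n - 3, by omega⟩
  refine ⟨cycleGraph_not_kColorConnectable, fun hn => ?_, fun hn => ?_⟩
  · obtain ⟨c, hc⟩ := Countable.exists_injective_nat (Sym2 (Fin (n + 3)))
    have hconn := cycleGraph_isKColorConnecting_of_injective (k := k) hc (by omega)
    have hcard : ∀ c', (cycleGraph (n + 3)).IsKColorConnecting k c' →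
        (c' '' (cycleGraph (n + 3)).edgeSet).ncard = n + 3 := fun c' hc' => by
      rw [(cycleGraph_injOn_of_isKColorConnecting hn hc').ncard_image, cycleGraph_ncard_edgeSet]
    refine ⟨⟨c, hconn⟩, ?_⟩
    rw [ccConn_eq_of_forall_le hconn fun c' hc' => ((hcard c hconn).trans (hcard c' hc').symm).le,
      hcard c hconn, hn]
  · have hconn := cycleGraph_isKColorConnecting_modColoring hn
    have hcard := cycleGraph_ncard_image_modColoring (n := n) (k := k) (by omega) (by omega)
    refine ⟨⟨_, hconn⟩, ?_⟩
    rw [ccConn_eq_of_forall_le hconn fun c' hc' => hcard.trans_le hc'.le_ncard_image, hcard]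
end

section
/- Let k ≥ 2, let G be a finite connected simple graph, and let H be a subdivision of G. If G is k-color connectable, then H is k-color connectable and cc_k(H) ≤ cc_k(G). -/
open SimpleGraph

/-- The graph obtained from `G` by subdividing the edge `uv`: delete `uv` and add a new
vertex `none` joined to `u` and `v`. -/
def SimpleGraph.subdivideEdge {V : Type*} (G : SimpleGraph V) (u v : V) :
    SimpleGraph (Option V) :=
  ((G.deleteEdges {s(u, v)}).map Function.Embedding.some) ⊔
    SimpleGraph.fromEdgeSet {s(none, some u), s(none, some v)}

/-- `IsSubdivision G H` : `H` is (up to isomorphism) obtained from `G` by a finite,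
possibly empty, sequence of single-edge subdivisions. -/
inductive IsSubdivision : ∀ {V W : Type u}, SimpleGraph V → SimpleGraph W → Prop
  | of_iso {V W : Type u} {G : SimpleGraph V} {H : SimpleGraph W} :
      Nonempty (G ≃g H) → IsSubdivision G H
  | step {V W : Type u} {G : SimpleGraph V} {H : SimpleGraph W} (u v : V) (h : G.Adj u v) :
      IsSubdivision (G.subdivideEdge u v) H → IsSubdivision G H


/-! Give both halves of a subdivided edge `uv` the colour of `uv`. A path of `G` then lifts to a
path of the subdivision with the same colour set, and the new vertex reaches any other vertex `w`
through `u` (or `v`) with at least the colours of a `u`–`w` (or `v`–`w`) path of `G`. So a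
`k`-color connecting colouring of `G` induces one of every subdivision of `G` without new colours,
which bounds `cc_k` because `G` has finitely many edges. -/

namespace SimpleGraph

variable {V : Type*} {G : SimpleGraph V} {u v : V}

lemma Walk.IsPath.exists_eq_cons_of_mem_edges {a b w : V} {p : G.Walk a w} (hp : p.IsPath)
    (he : s(a, b) ∈ p.edges) : ∃ (h : G.Adj a b) (q : G.Walk b w), p = .cons h q := by
  cases p with
  | nil => simp at he
  | cons h q =>
    rw [Walk.edges_cons, List.mem_cons] at he
    rcases he with he | he
    · obtain rfl := Sym2.congr_right.mp he
      exact ⟨h, q, rfl⟩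
    · exact absurd (q.fst_mem_support_of_mem_edges he) (Walk.cons_isPath_iff h q |>.mp hp).2

lemma subdivideEdge_adj_some_some {a b : V} (hab : G.Adj a b) (hne : s(a, b) ≠ s(u, v)) :
    (G.subdivideEdge u v).Adj (some a) (some b) := by
  rw [subdivideEdge, sup_adj, map_adj]
  exact Or.inl ⟨a, b, by simp [deleteEdges_adj, hab, hne], rfl, rfl⟩

lemma subdivideEdge_adj_none_some {a : V} (ha : a ∈ s(u, v)) :
    (G.subdivideEdge u v).Adj none (some a) := by
  rw [subdivideEdge, sup_adj, fromEdgeSet_adj]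
  rcases Sym2.mem_iff.mp ha with rfl | rfl <;> simp

open Classical in
noncomputable def Walk.subdivide (u v : V) :
    ∀ {a b : V}, G.Walk a b → (G.subdivideEdge u v).Walk (some a) (some b)
  | _, _, .nil => .nil
  | a, _, .cons (v := x) h p =>
    if hx : s(a, x) = s(u, v) then
      .cons (subdivideEdge_adj_none_some (hx ▸ Sym2.mem_mk_left a x)).symm
        (.cons (subdivideEdge_adj_none_some (hx ▸ Sym2.mem_mk_right a x)) (p.subdivide u v))
    else
      .cons (subdivideEdge_adj_some_some h hx) (p.subdivide u v)

open Classical in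
noncomputable def subdivideColoring (u v : V) (c : Sym2 V → ℕ) (e : Sym2 (Option V)) : ℕ :=
  if none ∈ e then c s(u, v) else c (e.map (Option.getD · u)) -- the default `u` is never used

@[simp]
lemma subdivideColoring_some_some (c : Sym2 V → ℕ) (a b : V) :
    subdivideColoring u v c s(some a, some b) = c s(a, b) := by
  simp [subdivideColoring]

@[simp]
lemma subdivideColoring_none_left (c : Sym2 V → ℕ) (x : Option V) :
    subdivideColoring u v c s(none, x) = c s(u, v) := by
  simp [subdivideColoring]

@[simp]
lemma subdivideColoring_none_right (c : Sym2 V → ℕ) (x : Option V) :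
    subdivideColoring u v c s(x, none) = c s(u, v) := by
  simp [subdivideColoring]

namespace Walk

lemma colors_subdivide (c : Sym2 V → ℕ) {a b : V} (p : G.Walk a b) :
    ((p.subdivide u v).edges.map (subdivideColoring u v c)).toFinset =
      (p.edges.map c).toFinset := by
  induction p with
  | nil => rfl
  | @cons a x _ h p ih =>
    by_cases hx : s(a, x) = s(u, v) <;> simp [subdivide, hx, ih]

lemma some_mem_support_subdivide_iff {a b x : V} (p : G.Walk a b) :
    some x ∈ (p.subdivide u v).support ↔ x ∈ p.support := by
  induction p with
  | nil => simp [subdivide]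
  | @cons a y _ h p ih =>
    by_cases hy : s(a, y) = s(u, v) <;> simp [subdivide, hy, ih]

lemma mem_edges_of_none_mem_support_subdivide {a b : V} (p : G.Walk a b)
    (hp : none ∈ (p.subdivide u v).support) : s(u, v) ∈ p.edges := by
  induction p with
  | nil => simp [subdivide] at hp
  | @cons a y _ h p ih =>
    by_cases hy : s(a, y) = s(u, v)
    · simp [hy]
    · simp only [subdivide, hy, dite_false, support_cons, List.mem_cons, reduceCtorEq,
        false_or] at hp
      exact List.mem_cons_of_mem _ (ih hp)

lemma IsPath.subdivide {a b : V} {p : G.Walk a b} (hp : p.IsPath) :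
    (p.subdivide u v).IsPath := by
  induction p with
  | nil => exact IsPath.nil
  | @cons a y _ h p ih =>
    obtain ⟨hp, ha⟩ := (cons_isPath_iff h p).mp hp
    have ha' : some a ∉ (p.subdivide u v).support := by
      rwa [some_mem_support_subdivide_iff]
    by_cases hy : s(a, y) = s(u, v)
    · have huv : s(u, v) ∉ p.edges := fun he => ha (p.fst_mem_support_of_mem_edges (hy ▸ he))
      simp only [Walk.subdivide, hy, dite_true, cons_isPath_iff, support_cons, List.mem_cons,
        reduceCtorEq, false_or]
      exact ⟨⟨ih hp, mt p.mem_edges_of_none_mem_support_subdivide huv⟩, ha'⟩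
    · simp only [Walk.subdivide, hy, dite_false, cons_isPath_iff]
      exact ⟨ih hp, ha'⟩

end Walk

lemma exists_isPath_none_some {k : ℕ} {c : Sym2 V → ℕ} {a b w : V} (hab : s(a, b) = s(u, v))
    {p : G.Walk a w} (hp : p.IsPath) (hk : k ≤ (p.edges.map c).toFinset.card) :
    ∃ q : (G.subdivideEdge u v).Walk none (some w), q.IsPath ∧
      k ≤ (q.edges.map (subdivideColoring u v c)).toFinset.card := by
  -- a path from `a` through the edge `ab` starts with it; then enter at `b` instead of `a`
  by_cases hp_ab : s(a, b) ∈ p.edges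
  · obtain ⟨h, q, rfl⟩ := hp.exists_eq_cons_of_mem_edges hp_ab
    obtain ⟨hq, ha⟩ := (Walk.cons_isPath_iff h q).mp hp
    have huv : s(u, v) ∉ q.edges := fun he => ha (q.fst_mem_support_of_mem_edges (hab ▸ he))
    refine ⟨.cons (subdivideEdge_adj_none_some (hab ▸ Sym2.mem_mk_right a b)) (q.subdivide u v),
      (Walk.cons_isPath_iff _ _).mpr
        ⟨hq.subdivide, mt q.mem_edges_of_none_mem_support_subdivide huv⟩, ?_⟩
    simpa [Walk.colors_subdivide, hab] using hk
  · have hp_uv : s(u, v) ∉ p.edges := hab ▸ hp_ab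
    refine ⟨.cons (subdivideEdge_adj_none_some (hab ▸ Sym2.mem_mk_left a b)) (p.subdivide u v),
      (Walk.cons_isPath_iff _ _).mpr
        ⟨hp.subdivide, mt p.mem_edges_of_none_mem_support_subdivide hp_uv⟩, ?_⟩
    simp only [Walk.edges_cons, List.map_cons, List.toFinset_cons, subdivideColoring_none_left,
      Walk.colors_subdivide]
    exact hk.trans (Finset.card_le_card (Finset.subset_insert _ _))

lemma IsKColorConnecting.subdivideEdge {k : ℕ} {c : Sym2 V → ℕ} (huv : G.Adj u v)
    (hc : G.IsKColorConnecting k c) :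
    (G.subdivideEdge u v).IsKColorConnecting k (subdivideColoring u v c) := by
  have from_none (w : V) : ∃ q : (G.subdivideEdge u v).Walk none (some w), q.IsPath ∧
      k ≤ (q.edges.map (subdivideColoring u v c)).toFinset.card := by
    by_cases hw : w = u
    · subst hw
      obtain ⟨p, hp, hk⟩ := hc v w huv.ne.symm
      exact exists_isPath_none_some Sym2.eq_swap hp hk
    · obtain ⟨p, hp, hk⟩ := hc u w (Ne.symm hw)
      exact exists_isPath_none_some rfl hp hk
  rintro (_ | a) (_ | b) hab
  · exact absurd rfl hab
  · exact from_none b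
  · obtain ⟨q, hq, hk⟩ := from_none a
    exact ⟨q.reverse, hq.reverse, by simpa using hk⟩
  · obtain ⟨p, hp, hk⟩ := hc a b (by simpa using hab)
    exact ⟨p.subdivide u v, hp.subdivide, by rwa [Walk.colors_subdivide]⟩

lemma image_subdivideColoring_edgeSet_subset (c : Sym2 V → ℕ) (huv : G.Adj u v) :
    subdivideColoring u v c '' (G.subdivideEdge u v).edgeSet ⊆ c '' G.edgeSet := by
  rintro _ ⟨e, he, rfl⟩
  rw [subdivideEdge, edgeSet_sup, Set.mem_union, edgeSet_fromEdgeSet] at he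
  rcases he with he | ⟨he, -⟩
  · rw [edgeSet_map, Set.mem_image] at he
    obtain ⟨e, he, rfl⟩ := he
    induction e using Sym2.ind with
    | _ a b => exact ⟨s(a, b), edgeSet_mono (deleteEdges_le _) he, by simp⟩
  · refine ⟨s(u, v), huv, ?_⟩
    rcases he with rfl | rfl <;> simp

end SimpleGraph

namespace SimpleGraph

variable {V W : Type*} {G : SimpleGraph V} {H : SimpleGraph W}

lemma IsKColorConnecting.map_iso {k : ℕ} {c : Sym2 V → ℕ} (e : G ≃g H)
    (hc : G.IsKColorConnecting k c) : H.IsKColorConnecting k (c ∘ Sym2.map e.symm) := by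
  intro x y hxy
  obtain ⟨p, hp, hk⟩ := hc (e.symm x) (e.symm y) (e.symm.injective.ne hxy)
  refine ⟨(p.map e.toHom).copy (e.apply_symm_apply x) (e.apply_symm_apply y),
    by simpa using hp.map e.injective, ?_⟩
  have hcomp : (c ∘ Sym2.map e.symm) ∘ Sym2.map e = c := by
    funext s
    simp [Sym2.map_map, Function.comp_def]
  simpa [Walk.edges_map, List.map_map, hcomp] using hk

lemma image_comp_symm_map_edgeSet (c : Sym2 V → ℕ) (e : G ≃g H) :
    (c ∘ Sym2.map e.symm) '' H.edgeSet ⊆ c '' G.edgeSet := by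
  rintro _ ⟨s, hs, rfl⟩
  exact ⟨s.map e.symm, e.symm.map_mem_edgeSet_iff.mpr hs, rfl⟩

end SimpleGraph

theorem IsSubdivision.exists_isKColorConnecting_image_subset {V W : Type u}
    {G : SimpleGraph V} {H : SimpleGraph W} (hsub : IsSubdivision G H) {k : ℕ}
    {c : Sym2 V → ℕ} (hc : G.IsKColorConnecting k c) :
    ∃ c' : Sym2 W → ℕ, H.IsKColorConnecting k c' ∧ c' '' H.edgeSet ⊆ c '' G.edgeSet := by
  induction hsub with
  | of_iso e => exact ⟨_, hc.map_iso e.some, image_comp_symm_map_edgeSet c e.some⟩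
  | step u v huv _ ih =>
    obtain ⟨c', hc', hsub'⟩ := ih (hc.subdivideEdge huv)
    exact ⟨c', hc', hsub'.trans (image_subdivideColoring_edgeSet_subset c huv)⟩

theorem stmt_8_general {V W : Type u} [Fintype V] (G : SimpleGraph V) (H : SimpleGraph W)
    (k : ℕ) (hsub : IsSubdivision G H)
    (h : G.KColorConnectable k) :
    H.KColorConnectable k ∧ H.ccConn k ≤ G.ccConn k := by
  obtain ⟨c₀, hc₀⟩ := h
  refine ⟨(hsub.exists_isKColorConnecting_image_subset hc₀).imp fun _ => And.left, ?_⟩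
  obtain ⟨c, hc, hcard⟩ : G.ccConn k ∈
      {n | ∃ c : Sym2 V → ℕ, G.IsKColorConnecting k c ∧ (c '' G.edgeSet).ncard = n} :=
    Nat.sInf_mem ⟨_, c₀, hc₀, rfl⟩
  obtain ⟨c', hc', hsub'⟩ := hsub.exists_isKColorConnecting_image_subset hc
  calc H.ccConn k ≤ (c' '' H.edgeSet).ncard := Nat.sInf_le ⟨c', hc', rfl⟩
    _ ≤ (c '' G.edgeSet).ncard := Set.ncard_le_ncard hsub' (Set.toFinite _)
    _ = G.ccConn k := hcard

theorem stmt_8 {V W : Type u} [Fintype V] (G : SimpleGraph V) (H : SimpleGraph W)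
    (k : ℕ) (hk : 2 ≤ k) (hG : G.Connected) (hsub : IsSubdivision G H)
    (h : G.KColorConnectable k) :
    H.KColorConnectable k ∧ H.ccConn k ≤ G.ccConn k :=
  stmt_8_general G H k hsub h
end

section
/- For each integer n ≥ 4, the rainbow connection number of the cycle C_n equals ⌈n/2⌉. -/
open SimpleGraph

/-- `c` is a rainbow connecting edge-coloring of `G`: between every pair of distinct
vertices there is a path no two of whose edges have the same color. -/
def SimpleGraph.IsRainbowConnecting {V : Type*} (G : SimpleGraph V)
    (c : Sym2 V → ℕ) : Prop :=
  ∀ u v : V, u ≠ v → ∃ p : G.Walk u v, p.IsPath ∧ (p.edges.map c).Nodup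

/-- The rainbow connection number `rc(G)`: the minimum number of colors used on the edges
of `G` by a rainbow connecting coloring. -/
noncomputable def SimpleGraph.rcNumber {V : Type*} (G : SimpleGraph V) : ℕ :=
  sInf {n : ℕ | ∃ c : Sym2 V → ℕ, G.IsRainbowConnecting c ∧ (c '' G.edgeSet).ncard = n}

/-!
Color the edge `{a, a + 1}` of `C_n` by `a mod ⌈n/2⌉`: the edges of any arc of at most `⌊n/2⌋`
edges then get distinct colors, and any two vertices are joined by such an arc. Conversely, a
rainbow path from `0` to `⌊n/2⌋` has at least `⌊n/2⌋` edges, hence as many colors. For odd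
`n = 2d + 1` and only `d` colors, the rainbow path from `u` to `u + d` must be the forward arc of
length `d`, so any `d` consecutive edges carry all `d` colors. The coloring is then `d`-periodic
along the cycle; as `2d ≡ -1 (mod n)` it is constant, which is absurd for `d ≥ 2`.
-/

theorem Nat.eq_or_eq_add_of_mod_eq_mod {a b k : ℕ} (h : a % k = b % k) (hab : a ≤ b)
    (hb : b < a + 2 * k) : b = a ∨ b = a + k := by
  obtain ⟨q, hq⟩ := (Nat.modEq_iff_dvd' hab).1 h
  have hq2 : q < 2 := by
    by_contra! hq2
    have : b - a < 2 * k := by omega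
    nlinarith
  interval_cases q <;> omega

namespace SimpleGraph

variable {V : Type*} {G : SimpleGraph V}

theorem isRainbowConnecting_of_forall_exists_walk {c : Sym2 V → ℕ}
    (h : ∀ u v : V, ∃ p : G.Walk u v, (p.edges.map c).Nodup) : G.IsRainbowConnecting c := by
  classical
  intro u v _
  obtain ⟨p, hp⟩ := h u v
  exact ⟨p.bypass, p.bypass_isPath, hp.sublist (p.edges_bypass_sublist_edges.map c)⟩

theorem Walk.length_le_ncard_image_edgeSet [Finite V] {α : Type*} {c : Sym2 V → α} {u v : V}
    (p : G.Walk u v) (hp : (p.edges.map c).Nodup) : p.length ≤ (c '' G.edgeSet).ncard := by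
  classical
  have hsub : ((p.edges.map c).toFinset : Set α) ⊆ c '' G.edgeSet := by
    intro x hx
    obtain ⟨e, he, rfl⟩ := List.mem_map.mp (List.mem_toFinset.mp hx)
    exact ⟨e, p.edges_subset_edgeSet he, rfl⟩
  have := Set.ncard_le_ncard hsub ((Set.toFinite _).image c)
  rwa [Set.ncard_coe_finset, List.toFinset_card_of_nodup hp, List.length_map,
    Walk.length_edges] at this

theorem rcNumber_eq_of_exists_le_of_forall_le {k : ℕ}
    (hle : ∃ c, G.IsRainbowConnecting c ∧ (c '' G.edgeSet).ncard ≤ k)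
    (hge : ∀ c, G.IsRainbowConnecting c → k ≤ (c '' G.edgeSet).ncard) : G.rcNumber = k := by
  obtain ⟨c, hc, hck⟩ := hle
  have hmem : (c '' G.edgeSet).ncard ∈
      {n : ℕ | ∃ c : Sym2 V → ℕ, G.IsRainbowConnecting c ∧ (c '' G.edgeSet).ncard = n} :=
    ⟨c, hc, rfl⟩
  refine le_antisymm ((Nat.sInf_le hmem).trans hck) (le_csInf ⟨_, hmem⟩ ?_)
  rintro _ ⟨c', hc', rfl⟩
  exact hge c' hc'

end SimpleGraph

section Windows

variable {M α : Type*} [AddCommMonoidWithOne M] [Finite M] {f : M → α} {d : ℕ}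

theorem apply_add_eq_of_nodup_windows (hcard : (Set.range f).ncard ≤ d)
    (hw : ∀ u, ((List.range d).map fun i : ℕ => f (u + i)).Nodup) (u : M) : f (u + d) = f u := by
  classical
  have hsub : (((List.range d).map fun i : ℕ => f (u + i)).toFinset : Set α) ⊆ Set.range f := by
    intro x hx
    obtain ⟨i, -, rfl⟩ := List.mem_map.mp (List.mem_toFinset.mp hx)
    exact ⟨_, rfl⟩
  have hfull := Set.eq_of_subset_of_ncard_le hsub (by
    rwa [Set.ncard_coe_finset, List.toFinset_card_of_nodup (hw u), List.length_map,
      List.length_range])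
  have hmem : f (u + d) ∈ (List.range d).map fun i : ℕ => f (u + i) :=
    List.mem_toFinset.mp (by rw [← Finset.mem_coe, hfull]; exact ⟨u + d, rfl⟩)
  obtain ⟨i, hi, hfi⟩ := List.mem_map.mp hmem
  rw [List.mem_range] at hi
  cases i with
  | zero => simpa using hfi.symm
  | succ j =>
    suffices j = d - 1 by omega
    refine List.inj_on_of_nodup_map (hw (u + 1)) (List.mem_range.mpr (by omega))
      (List.mem_range.mpr (by omega)) ?_
    have hd : d - 1 + 1 = d := by omega
    simp only [← hfi, add_assoc, ← Nat.cast_one (R := M), ← Nat.cast_add, add_comm 1, hd]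

theorem not_forall_nodup_windows (hd : 2 ≤ d) (hM : ((2 * d + 1 : ℕ) : M) = 0)
    (hcard : (Set.range f).ncard ≤ d) :
    ¬ ∀ u, ((List.range d).map fun i : ℕ => f (u + i)).Nodup := by
  intro hw
  have hshift := apply_add_eq_of_nodup_windows hcard hw
  have h10 : f (0 + (1 : ℕ)) = f (0 + (0 : ℕ)) := by
    calc f (0 + (1 : ℕ)) = f (1 + d + d) := by rw [hshift, hshift, zero_add, Nat.cast_one]
      _ = f (0 + (0 : ℕ)) := by
        rw [Nat.cast_zero, add_zero, ← hM, two_mul, Nat.cast_add, Nat.cast_add, Nat.cast_one]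
        abel_nf
  have := List.inj_on_of_nodup_map (hw 0) (List.mem_range.mpr (by omega : 1 < d))
    (List.mem_range.mpr (by omega : 0 < d)) h10
  omega

end Windows

open Fin.CommRing

theorem Fin.eq_of_sym2_add_one_eq {n : ℕ} [NeZero n] (hn : 3 ≤ n) {a b : Fin n}
    (h : s(a, a + 1) = s(b, b + 1)) : a = b := by
  rcases Sym2.eq_iff.1 h with ⟨rfl, -⟩ | ⟨hab, hba⟩
  · rfl
  · have h2 : ((2 : ℕ) : Fin n) = 0 := by push_cast; linear_combination hba - hab
    rw [Fin.ext_iff, Fin.val_natCast, Fin.val_zero, Nat.mod_eq_of_lt (by omega)] at h2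
    omega

namespace SimpleGraph

variable {n : ℕ} [NeZero n]

theorem cycleGraph_adj_iff (hn : 2 ≤ n) {u v : Fin n} :
    (cycleGraph n).Adj u v ↔ v = u + 1 ∨ u = v + 1 := by
  obtain ⟨m, rfl⟩ : ∃ m, n = m + 2 := ⟨n - 2, by omega⟩
  rw [cycleGraph_adj, sub_eq_iff_eq_add', sub_eq_iff_eq_add', or_comm]

def cycleArc (u : Fin n) (m : ℕ) : List (Sym2 (Fin n)) :=
  (List.range m).map fun i : ℕ => s(u + i, u + i + 1)

theorem cycleArc_succ (u : Fin n) (m : ℕ) :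
    cycleArc u (m + 1) = s(u, u + 1) :: cycleArc (u + 1) m := by
  rw [cycleArc, cycleArc, List.range_succ_eq_map, List.map_cons, List.map_map]
  congr 1
  · simp
  · refine List.map_congr_left fun i _ => ?_
    rw [Function.comp_apply, show u + ((i + 1 : ℕ) : Fin n) = u + 1 + i by push_cast; ring]

def cycleArcWalk (hn : 2 ≤ n) (u : Fin n) : (m : ℕ) → (cycleGraph n).Walk u (u + m)
  | 0 => Walk.nil.copy rfl (by simp)
  | m + 1 => (Walk.cons ((cycleGraph_adj_iff hn).2 (.inl rfl)) (cycleArcWalk hn (u + 1) m)).copy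
      rfl (by push_cast; ring)

theorem cycleArcWalk_edges (hn : 2 ≤ n) (u : Fin n) (m : ℕ) :
    (cycleArcWalk hn u m).edges = cycleArc u m := by
  induction m generalizing u with
  | zero => simp [cycleArcWalk, cycleArc]
  | succ m ih => rw [cycleArcWalk, Walk.edges_copy, Walk.edges_cons, ih, cycleArc_succ]

theorem cycleGraph.Walk.exists_add_eq_add (hn : 2 ≤ n) {u v : Fin n}
    (p : (cycleGraph n).Walk u v) : ∃ a b : ℕ, a + b = p.length ∧ v + b = u + a := by
  induction p with
  | nil => exact ⟨0, 0, rfl, rfl⟩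
  | cons h q ih =>
    obtain ⟨a, b, hab, hv⟩ := ih
    rw [Walk.length_cons]
    rcases (cycleGraph_adj_iff hn).1 h with rfl | rfl
    · exact ⟨a + 1, b, by omega, by rw [hv]; push_cast; ring⟩
    · exact ⟨a, b + 1, by omega, by push_cast; rw [← add_assoc, hv]; ring⟩

theorem cycleGraph.Walk.le_length_or_le_add_length (hn : 2 ≤ n) {u v : Fin n} {d : ℕ}
    (p : (cycleGraph n).Walk u v) (hv : v = u + d) (hd : d < n) :
    d ≤ p.length ∨ n ≤ d + p.length := by
  obtain ⟨a, b, hab, hdisp⟩ := cycleGraph.Walk.exists_add_eq_add hn p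
  by_contra! hlt
  have hsum : ((d : Fin n) + b).val = (a : Fin n).val := by
    rw [hv, add_assoc] at hdisp
    rw [add_left_cancel hdisp]
  rw [Fin.val_add_eq_ite, Fin.val_natCast, Fin.val_natCast, Fin.val_natCast,
    Nat.mod_eq_of_lt hd, Nat.mod_eq_of_lt (by omega), Nat.mod_eq_of_lt (by omega)] at hsum
  split_ifs at hsum <;> omega

theorem cycleGraph.Walk.edges_eq_cycleArc (hn : 2 ≤ n) {u v : Fin n}
    (p : (cycleGraph n).Walk u v) (hv : v = u + p.length) (hlen : 2 * p.length < n) :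
    p.edges = cycleArc u p.length := by
  induction p with
  | nil => rfl
  | @cons u w v h q ih =>
    rw [Walk.length_cons] at hv hlen
    rcases (cycleGraph_adj_iff hn).1 h with rfl | rfl
    · rw [Walk.edges_cons, Walk.length_cons, cycleArc_succ,
        ih (hv.trans (by push_cast; ring)) (by omega)]
    · -- after a step back, `q` has to advance `q.length + 2` in `q.length` steps
      have := cycleGraph.Walk.le_length_or_le_add_length hn q (d := q.length + 2)
        (hv.trans (by push_cast; ring)) (by omega)
      omega

open Classical in
noncomputable def cycleColoring (k : ℕ) (e : Sym2 (Fin n)) : ℕ :=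
  if h : ∃ a : Fin n, s(a, a + 1) = e then h.choose.val % k else 0

theorem cycleColoring_mk (hn : 3 ≤ n) (k : ℕ) (a : Fin n) :
    cycleColoring k s(a, a + 1) = a.val % k := by
  have h : ∃ b : Fin n, s(b, b + 1) = s(a, a + 1) := ⟨a, rfl⟩
  rw [cycleColoring, dif_pos h, Fin.eq_of_sym2_add_one_eq hn h.choose_spec]

theorem ncard_image_cycleColoring_le {k : ℕ} (hk : 0 < k) (s : Set (Sym2 (Fin n))) :
    (cycleColoring k '' s).ncard ≤ k := by
  refine (Set.ncard_le_ncard ?_ (Set.finite_Iio k)).trans (Set.ncard_Iio_nat k).le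
  rintro _ ⟨e, -, rfl⟩
  unfold cycleColoring
  split_ifs
  exacts [Nat.mod_lt _ hk, hk]

theorem cycleColoring_cycleArc_nodup (hn : 3 ≤ n) (u : Fin n) {m : ℕ} (hm : m ≤ n / 2) :
    ((cycleArc u m).map (cycleColoring ((n + 1) / 2))).Nodup := by
  rw [cycleArc, List.map_map]
  refine List.Nodup.map_on (fun i hi j hj hij => ?_) List.nodup_range
  rw [List.mem_range] at hi hj
  simp only [Function.comp_apply, cycleColoring_mk hn] at hij
  by_contra hne
  wlog hlt : i < j generalizing i j
  · exact this j hj i hi hij.symm (Ne.symm hne) (by omega)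
  obtain ⟨e, rfl⟩ : ∃ e, j = i + e := ⟨j - i, by omega⟩
  rw [Nat.cast_add, ← add_assoc, Fin.val_add_eq_ite (u + (i : Fin n)), Fin.val_natCast,
    Nat.mod_eq_of_lt (show e < n by omega)] at hij
  have := (u + i).isLt
  split_ifs at hij
  · have := Nat.eq_or_eq_add_of_mod_eq_mod hij.symm (by omega) (by omega)
    omega
  · have := Nat.eq_or_eq_add_of_mod_eq_mod hij (by omega) (by omega)
    omega

theorem cycleColoring_isRainbowConnecting (hn : 3 ≤ n) :
    (cycleGraph n).IsRainbowConnecting (cycleColoring ((n + 1) / 2)) := by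
  refine isRainbowConnecting_of_forall_exists_walk fun u v => ?_
  have hn2 : 2 ≤ n := by omega
  obtain ⟨d, hd, rfl⟩ : ∃ d < n, v = u + d :=
    ⟨(v - u).val, (v - u).isLt, by rw [Fin.cast_val_eq_self]; ring⟩
  by_cases hdn : d ≤ n / 2
  · refine ⟨cycleArcWalk hn2 u d, ?_⟩
    rw [cycleArcWalk_edges]
    exact cycleColoring_cycleArc_nodup hn u hdn
  · have hback : u + d + ((n - d : ℕ) : Fin n) = u := by
      rw [Nat.cast_sub hd.le, Fin.natCast_self]; ring
    refine ⟨((cycleArcWalk hn2 (u + d) (n - d)).copy rfl hback).reverse, ?_⟩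
    rw [Walk.edges_reverse, Walk.edges_copy, List.map_reverse, List.nodup_reverse,
      cycleArcWalk_edges]
    exact cycleColoring_cycleArc_nodup hn _ (by omega)

theorem cycleGraph_div_two_le_ncard_image (hn : 2 ≤ n) {c : Sym2 (Fin n) → ℕ}
    (hc : (cycleGraph n).IsRainbowConnecting c) :
    n / 2 ≤ (c '' (cycleGraph n).edgeSet).ncard := by
  obtain ⟨p, -, hp⟩ := hc 0 (n / 2 : ℕ) (by
    rw [Ne, Fin.ext_iff, Fin.val_zero, Fin.val_natCast, Nat.mod_eq_of_lt (by omega)]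
    omega)
  have := cycleGraph.Walk.le_length_or_le_add_length hn p (zero_add _).symm (by omega)
  have := p.length_le_ncard_image_edgeSet hp
  omega

theorem cycleGraph_lt_ncard_image_of_eq_two_mul_add_one {d : ℕ} (hn : n = 2 * d + 1)
    (hd : 2 ≤ d) {c : Sym2 (Fin n) → ℕ} (hc : (cycleGraph n).IsRainbowConnecting c) :
    d < (c '' (cycleGraph n).edgeSet).ncard := by
  have hn2 : 2 ≤ n := by omega
  by_contra! hcard
  have hrange : Set.range (fun a : Fin n => c s(a, a + 1)) ⊆ c '' (cycleGraph n).edgeSet := by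
    rintro _ ⟨a, rfl⟩
    exact ⟨_, (cycleGraph_adj_iff hn2).2 (.inl rfl), rfl⟩
  refine not_forall_nodup_windows hd (by rw [← hn, Fin.natCast_self])
    ((Set.ncard_le_ncard hrange (Set.toFinite _)).trans hcard) fun u => ?_
  obtain ⟨p, -, hp⟩ := hc u (u + d) (by
    rw [Ne, left_eq_add, Fin.ext_iff, Fin.val_natCast, Fin.val_zero, Nat.mod_eq_of_lt (by omega)]
    omega)
  have hlen : p.length = d := by
    have := cycleGraph.Walk.le_length_or_le_add_length hn2 p rfl (by omega)
    have := p.length_le_ncard_image_edgeSet hp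
    omega
  rwa [cycleGraph.Walk.edges_eq_cycleArc hn2 p (by rw [hlen]) (by omega), hlen, cycleArc,
    List.map_map] at hp

theorem cycleGraph_le_ncard_image (hn : 4 ≤ n) {c : Sym2 (Fin n) → ℕ}
    (hc : (cycleGraph n).IsRainbowConnecting c) :
    (n + 1) / 2 ≤ (c '' (cycleGraph n).edgeSet).ncard := by
  obtain ⟨d, rfl | rfl⟩ := Nat.even_or_odd' n
  · have := cycleGraph_div_two_le_ncard_image (by omega) hc
    omega
  · have := cycleGraph_lt_ncard_image_of_eq_two_mul_add_one rfl (by omega) hc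
    omega

end SimpleGraph

theorem stmt_18 (n : ℕ) (hn : 4 ≤ n) :
    (cycleGraph n).rcNumber = (n + 1) / 2 := by
  have : NeZero n := ⟨by omega⟩
  exact rcNumber_eq_of_exists_le_of_forall_le ⟨_, cycleColoring_isRainbowConnecting (by omega),
    ncard_image_cycleColoring_le (by omega) _⟩ fun c hc => cycleGraph_le_ncard_image hn hc
end

section
/- For each integer n ≥ 3, the rainbow connection number of the wheel W_n equals 1 if n = 3, equals 2 if 4 ≤ n ≤ 6, and equals 3 if n ≥ 7. -/
open SimpleGraph

/-- The wheel `W n`: the cycle `C n` together with a new hub vertex (`none`) adjacent to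
every vertex of the cycle. -/
def wheelGraph (n : ℕ) : SimpleGraph (Option (Fin n)) :=
  SimpleGraph.fromRel fun a b =>
    a = none ∨ ∃ x y : Fin n, a = some x ∧ b = some y ∧ (cycleGraph n).Adj x y

/-! ### Auxiliary lemmas -/

instance (n : ℕ) : DecidableRel (wheelGraph n).Adj := fun a b =>
  decidable_of_iff (a ≠ b ∧
      ((a = none ∨ ∃ x y : Fin n, a = some x ∧ b = some y ∧ (cycleGraph n).Adj x y) ∨
       (b = none ∨ ∃ x y : Fin n, b = some x ∧ a = some y ∧ (cycleGraph n).Adj x y)))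
    (by rw [wheelGraph, fromRel_adj])

lemma wheel_adj_hub {n : ℕ} (i : Fin n) : (wheelGraph n).Adj none (some i) := by
  rw [wheelGraph, fromRel_adj]
  exact ⟨by simp, Or.inl (Or.inl rfl)⟩

lemma wheel_adj_some {n : ℕ} {i j : Fin n} :
    (wheelGraph n).Adj (some i) (some j) ↔ (cycleGraph n).Adj i j := by
  rw [wheelGraph, fromRel_adj]
  constructor
  · rintro ⟨_, (h | h) | (h | h)⟩
    · simp at h
    · obtain ⟨x, y, hx, hy, h⟩ := h
      simp_all
    · simp at h
    · obtain ⟨x, y, hx, hy, h⟩ := h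
      simp_all
      exact h.symm
  · intro h
    exact ⟨by simpa using h.ne, Or.inl (Or.inr ⟨i, j, rfl, rfl, h⟩)⟩

lemma fin_sub_val {n : ℕ} (a b : Fin n) (h : b.val ≤ a.val) : (a - b).val = a.val - b.val := by
  rw [Fin.sub_def]
  simp only
  have hb := b.isLt
  have ha := a.isLt
  have : (n - b.val) + a.val = n + (a.val - b.val) := by omega
  rw [this, Nat.add_mod_left, Nat.mod_eq_of_lt (by omega)]

lemma fin_sub_val' {n : ℕ} (a b : Fin n) (h : b.val < a.val) :
    (b - a).val = n - (a.val - b.val) := by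
  rw [Fin.sub_def]
  simp only
  have ha := a.isLt
  rw [Nat.mod_eq_of_lt (by omega)]
  omega

lemma cycAdj_val {n : ℕ} {x y : Fin n} (h : (cycleGraph n).Adj x y) :
    x.val + 1 = y.val ∨ y.val + 1 = x.val ∨ (x.val = 0 ∧ y.val + 1 = n) ∨
      (y.val = 0 ∧ x.val + 1 = n) := by
  have hne : x.val ≠ y.val := fun he => h.ne (Fin.ext he)
  have hx := x.isLt
  have hy := y.isLt
  rw [SimpleGraph.cycleGraph_adj'] at h
  rcases lt_or_gt_of_ne hne with hlt | hlt
  · rw [fin_sub_val y x (le_of_lt hlt), fin_sub_val' y x hlt] at h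
    omega
  · rw [fin_sub_val x y (le_of_lt hlt), fin_sub_val' x y hlt] at h
    omega

lemma cycAdj_of_succ {n : ℕ} {x y : Fin n} (h : x.val + 1 = y.val) :
    (cycleGraph n).Adj x y := by
  rw [SimpleGraph.cycleGraph_adj']
  right
  rw [fin_sub_val y x (by omega)]
  omega

lemma rb_of_adj {V : Type*} {G : SimpleGraph V} (c : Sym2 V → ℕ) {u v : V} (h : G.Adj u v) :
    ∃ p : G.Walk u v, p.IsPath ∧ (p.edges.map c).Nodup :=
  ⟨Walk.cons h Walk.nil, by simp [Walk.isPath_def, h.ne], by simp⟩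

lemma rb_of_two {V : Type*} {G : SimpleGraph V} (c : Sym2 V → ℕ) {u w v : V}
    (h1 : G.Adj u w) (h2 : G.Adj w v) (huv : u ≠ v)
    (hc : c s(u, w) ≠ c s(w, v)) :
    ∃ p : G.Walk u v, p.IsPath ∧ (p.edges.map c).Nodup :=
  ⟨Walk.cons h1 (Walk.cons h2 Walk.nil),
   by simp [Walk.isPath_def, h1.ne, h2.ne, huv], by simp [hc]⟩

lemma rb_of_three {V : Type*} {G : SimpleGraph V} (c : Sym2 V → ℕ) {u w x v : V}
    (h1 : G.Adj u w) (h2 : G.Adj w x) (h3 : G.Adj x v)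
    (hux : u ≠ x) (huv : u ≠ v) (hwv : w ≠ v)
    (hc1 : c s(u, w) ≠ c s(w, x)) (hc2 : c s(u, w) ≠ c s(x, v))
    (hc3 : c s(w, x) ≠ c s(x, v)) :
    ∃ p : G.Walk u v, p.IsPath ∧ (p.edges.map c).Nodup :=
  ⟨Walk.cons h1 (Walk.cons h2 (Walk.cons h3 Walk.nil)),
   by simp [Walk.isPath_def, h1.ne, h2.ne, h3.ne, hux, huv, hwv],
   by simp [hc1, hc2, hc3]⟩

lemma walk_length_le {V : Type*} [Fintype V] [DecidableEq V] {G : SimpleGraph V}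
    (c : Sym2 V → ℕ) {u v : V} (p : G.Walk u v)
    (hd : (p.edges.map c).Nodup) : p.length ≤ (c '' G.edgeSet).ncard := by
  classical
  have hsub : (p.edges.map c).toFinset ⊆ (c '' G.edgeSet).toFinset := by
    intro x hx
    rw [List.mem_toFinset] at hx
    obtain ⟨e, he, rfl⟩ := List.mem_map.mp hx
    rw [Set.mem_toFinset]
    exact ⟨e, p.edges_subset_edgeSet he, rfl⟩
  have h1 : (p.edges.map c).toFinset.card = p.length := by
    rw [List.toFinset_card_of_nodup hd, List.length_map, Walk.length_edges]
  calc p.length = (p.edges.map c).toFinset.card := h1.symm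
    _ ≤ (c '' G.edgeSet).toFinset.card := Finset.card_le_card hsub
    _ = (c '' G.edgeSet).ncard := (Set.ncard_eq_toFinset_card' _).symm

lemma two_of_ncard {S : Set ℕ} (hfin : S.Finite) (hS : S.ncard ≤ 2) {x y z : ℕ}
    (hx : x ∈ S) (hy : y ∈ S) (hz : z ∈ S) (hxz : x ≠ z) (hyz : y ≠ z) : x = y := by
  by_contra hxy
  have hsub : ({x, y, z} : Set ℕ) ⊆ S := by
    intro a ha
    simp only [Set.mem_insert_iff, Set.mem_singleton_iff] at ha
    rcases ha with rfl | rfl | rfl <;> assumption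
  have h3 : ({x, y, z} : Set ℕ).ncard = 3 :=
    Set.ncard_eq_three.mpr ⟨x, y, z, hxy, hxz, hyz, rfl⟩
  have := Set.ncard_le_ncard hsub hfin
  omega

lemma walk_struct {V : Type*} {G : SimpleGraph V} {u v : V} (p : G.Walk u v)
    (h : p.length ≤ 2) :
    u = v ∨ G.Adj u v ∨ ∃ w, G.Adj u w ∧ G.Adj w v ∧ p.edges = [s(u, w), s(w, v)] := by
  match p with
  | .nil => exact Or.inl rfl
  | .cons h1 .nil => exact Or.inr (Or.inl h1)
  | .cons h1 (.cons h2 .nil) => exact Or.inr (Or.inr ⟨_, h1, h2, by simp⟩)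
  | .cons _ (.cons _ (.cons _ q)) => simp [SimpleGraph.Walk.length_cons] at h

/-! ### Lower bounds -/

lemma lb_one {n : ℕ} (hn : 1 ≤ n) (c : Sym2 (Option (Fin n)) → ℕ) :
    1 ≤ (c '' (wheelGraph n).edgeSet).ncard := by
  have hmem : c s(none, some ⟨0, by omega⟩) ∈ c '' (wheelGraph n).edgeSet :=
    ⟨_, (wheelGraph n).mem_edgeSet.mpr (wheel_adj_hub _), rfl⟩
  have hpos : 0 < (c '' (wheelGraph n).edgeSet).ncard :=
    (Set.ncard_pos (Set.toFinite _)).mpr ⟨_, hmem⟩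
  omega

lemma lb_two {n : ℕ} (hn : 4 ≤ n) {c : Sym2 (Option (Fin n)) → ℕ}
    (hrc : (wheelGraph n).IsRainbowConnecting c) :
    2 ≤ (c '' (wheelGraph n).edgeSet).ncard := by
  by_contra hlt
  push_neg at hlt
  obtain ⟨p, hp, hd⟩ := hrc (some ⟨0, by omega⟩) (some ⟨2, by omega⟩)
    (by simp [Fin.ext_iff])
  have hlen := walk_length_le c p hd
  rcases walk_struct p (by omega) with he | hadj | ⟨w, hw1, hw2, hedges⟩
  · simp [Fin.ext_iff] at he
  · have := cycAdj_val (wheel_adj_some.mp hadj)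
    simp only [Fin.val_mk] at this
    omega
  · have hlen2 : p.length = 2 := by
      rw [← SimpleGraph.Walk.length_edges, hedges]
      rfl
    omega

lemma far_ne {n : ℕ} {c : Sym2 (Option (Fin n)) → ℕ}
    (hrc : (wheelGraph n).IsRainbowConnecting c)
    (hcard : (c '' (wheelGraph n).edgeSet).ncard ≤ 2)
    {a b : Fin n} (h1 : a.val + 3 ≤ b.val) (h2 : b.val + 3 ≤ a.val + n) :
    c s(none, some a) ≠ c s(none, some b) := by
  obtain ⟨p, hp, hd⟩ := hrc (some a) (some b) (by simp [Fin.ext_iff]; omega)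
  have hlen := walk_length_le c p hd
  rcases walk_struct p (by omega) with he | hadj | ⟨w, hw1, hw2, hedges⟩
  · exfalso
    simp [Fin.ext_iff] at he
    omega
  · exfalso
    have := cycAdj_val (wheel_adj_some.mp hadj)
    have := a.isLt
    have := b.isLt
    omega
  · cases w with
    | some k =>
      exfalso
      have hk1 := cycAdj_val (wheel_adj_some.mp hw1)
      have hk2 := cycAdj_val (wheel_adj_some.mp hw2)
      have := a.isLt
      have := b.isLt
      have := k.isLt
      omega
    | none =>
      rw [hedges] at hd
      simp only [List.map_cons, List.map_nil, List.nodup_cons, List.mem_cons,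
        List.not_mem_nil, or_false, List.nodup_nil, and_true] at hd
      rw [Sym2.eq_swap (a := some a) (b := (none : Option (Fin n)))] at hd
      exact hd.1

lemma lb_three {n : ℕ} (hn : 7 ≤ n) {c : Sym2 (Option (Fin n)) → ℕ}
    (hrc : (wheelGraph n).IsRainbowConnecting c) :
    3 ≤ (c '' (wheelGraph n).edgeSet).ncard := by
  by_contra hlt
  push_neg at hlt
  have hcard : (c '' (wheelGraph n).edgeSet).ncard ≤ 2 := by omega
  have hfin : (c '' (wheelGraph n).edgeSet).Finite := Set.toFinite _
  have hmem : ∀ i : Fin n, c s(none, some i) ∈ c '' (wheelGraph n).edgeSet := fun i =>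
    ⟨_, (wheelGraph n).mem_edgeSet.mpr (wheel_adj_hub i), rfl⟩
  have key : ∀ j : ℕ, (hj : j + 4 < n) →
      c s(none, some (⟨j, by omega⟩ : Fin n)) = c s(none, some (⟨j + 1, by omega⟩ : Fin n)) := by
    intro j hj
    have hA := far_ne hrc hcard (a := ⟨j, by omega⟩) (b := ⟨j + 4, by omega⟩)
      (by show j + 3 ≤ j + 4; omega) (by show j + 4 + 3 ≤ j + n; omega)
    have hB := far_ne hrc hcard (a := ⟨j + 1, by omega⟩) (b := ⟨j + 4, by omega⟩)
      (by show j + 1 + 3 ≤ j + 4; omega) (by show j + 4 + 3 ≤ j + 1 + n; omega)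
    exact two_of_ncard hfin hcard (hmem _) (hmem _) (hmem ⟨j + 4, by omega⟩) hA hB
  have h03 : c s(none, some (⟨0, by omega⟩ : Fin n)) ≠ c s(none, some (⟨3, by omega⟩ : Fin n)) :=
    far_ne hrc hcard (a := ⟨0, by omega⟩) (b := ⟨3, by omega⟩)
      (by show 0 + 3 ≤ 3; omega) (by show 3 + 3 ≤ 0 + n; omega)
  have e0 := key 0 (by omega)
  have e1 := key 1 (by omega)
  have e2 := key 2 (by omega)
  exact h03 (e0.trans (e1.trans e2))

/-! ### Colorings -/

def spokeCol (n : ℕ) (i : Fin n) : ℕ := if n ≤ 5 then i.val % 2 else i.val / 3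

def g2fun (n : ℕ) : Option (Fin n) → Option (Fin n) → ℕ
  | some i, some j => (if i.val ≤ j.val then i.val else j.val) % 2
  | some i, none => spokeCol n i
  | none, some j => spokeCol n j
  | none, none => 0

def g3fun (n : ℕ) : Option (Fin n) → Option (Fin n) → ℕ
  | some _, some _ => 2
  | some i, none => i.val % 2
  | none, some j => j.val % 2
  | none, none => 0

def c2col (n : ℕ) : Sym2 (Option (Fin n)) → ℕ :=
  Sym2.lift ⟨g2fun n, by
    intro a b
    cases a <;> cases b <;> simp only [g2fun] <;> (try rfl) <;> split <;> split <;> omega⟩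

def c3col (n : ℕ) : Sym2 (Option (Fin n)) → ℕ :=
  Sym2.lift ⟨g3fun n, by
    intro a b
    cases a <;> cases b <;> simp [g3fun]⟩

lemma rc_of_Q {n : ℕ} (c : Sym2 (Option (Fin n)) → ℕ)
    (hQ : ∀ u v : Option (Fin n), u ≠ v → (wheelGraph n).Adj u v ∨
      ∃ w, (wheelGraph n).Adj u w ∧ (wheelGraph n).Adj w v ∧ c s(u, w) ≠ c s(w, v)) :
    (wheelGraph n).IsRainbowConnecting c := by
  intro u v huv
  rcases hQ u v huv with h | ⟨w, h1, h2, hc⟩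
  · exact rb_of_adj c h
  · exact rb_of_two c h1 h2 huv hc

lemma rc3 {n : ℕ} (hn : 7 ≤ n) : (wheelGraph n).IsRainbowConnecting (c3col n) := by
  intro u v huv
  match u, v with
  | none, none => exact absurd rfl huv
  | none, some j => exact rb_of_adj _ (wheel_adj_hub j)
  | some i, none => exact rb_of_adj _ (wheel_adj_hub i).symm
  | some i, some j =>
    have hij : i ≠ j := by simpa using huv
    by_cases hadj : (cycleGraph n).Adj i j
    · exact rb_of_adj _ (wheel_adj_some.mpr hadj)
    by_cases hpar : i.val % 2 = j.val % 2
    · -- same parity : length-3 path via hub and a neighbor of j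
      by_cases h0 : j.val = 0
      case pos =>
        have hwj : (cycleGraph n).Adj (⟨1, by omega⟩ : Fin n) j :=
          (cycAdj_of_succ (x := j) (y := ⟨1, by omega⟩) (by show j.val + 1 = 1; omega)).symm
        refine rb_of_three _ (wheel_adj_hub i).symm (wheel_adj_hub ⟨1, by omega⟩)
          (wheel_adj_some.mpr hwj) ?_ huv (by simp) ?_ ?_ ?_
        · simp only [ne_eq, Option.some.injEq]
          intro he
          exact hadj (he ▸ hwj)
        all_goals
          have hval : ((⟨1, by omega⟩ : Fin n)).val = 1 := rfl
          simp only [c3col, Sym2.lift_mk, g3fun, ne_eq, hval]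
          omega
      case neg =>
        have hwj : (cycleGraph n).Adj (⟨j.val - 1, by omega⟩ : Fin n) j :=
          cycAdj_of_succ (x := ⟨j.val - 1, by omega⟩) (y := j)
            (by show j.val - 1 + 1 = j.val; omega)
        refine rb_of_three _ (wheel_adj_hub i).symm (wheel_adj_hub ⟨j.val - 1, by omega⟩)
          (wheel_adj_some.mpr hwj) ?_ huv (by simp) ?_ ?_ ?_
        · simp only [ne_eq, Option.some.injEq]
          intro he
          exact hadj (he ▸ hwj)
        all_goals
          have hval : ((⟨j.val - 1, by omega⟩ : Fin n)).val = j.val - 1 := rfl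
          simp only [c3col, Sym2.lift_mk, g3fun, ne_eq, hval]
          omega
    · -- different parity : path through the hub
      refine rb_of_two _ (wheel_adj_hub i).symm (wheel_adj_hub j) huv ?_
      simp only [c3col, Sym2.lift_mk, g3fun, ne_eq]
      omega

lemma image3 {n : ℕ} (hn : 7 ≤ n) :
    (c3col n '' (wheelGraph n).edgeSet).ncard = 3 := by
  have himg : c3col n '' (wheelGraph n).edgeSet = {0, 1, 2} := by
    apply Set.Subset.antisymm
    · rintro x ⟨e, he, rfl⟩
      induction e using Sym2.ind with
      | _ a b =>
        have : c3col n s(a, b) = 0 ∨ c3col n s(a, b) = 1 ∨ c3col n s(a, b) = 2 := by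
          simp only [c3col, Sym2.lift_mk]
          cases a <;> cases b <;> simp [g3fun] <;> omega
        simpa using this
    · intro x hx
      simp only [Set.mem_insert_iff, Set.mem_singleton_iff] at hx
      rcases hx with rfl | rfl | rfl
      · exact ⟨s(none, some ⟨0, by omega⟩), (wheelGraph n).mem_edgeSet.mpr (wheel_adj_hub _), rfl⟩
      · exact ⟨s(none, some ⟨1, by omega⟩), (wheelGraph n).mem_edgeSet.mpr (wheel_adj_hub _), rfl⟩
      · exact ⟨s(some ⟨0, by omega⟩, some ⟨1, by omega⟩),
          (wheelGraph n).mem_edgeSet.mpr (wheel_adj_some.mpr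
            (cycAdj_of_succ (by show 0 + 1 = 1; rfl))), rfl⟩
  rw [himg]
  exact Set.ncard_eq_three.mpr ⟨0, 1, 2, by omega, by omega, by omega, rfl⟩

lemma image2 {n : ℕ} (hn : 4 ≤ n) (hn' : n ≤ 6) :
    (c2col n '' (wheelGraph n).edgeSet).ncard = 2 := by
  have himg : c2col n '' (wheelGraph n).edgeSet = {0, 1} := by
    apply Set.Subset.antisymm
    · rintro x ⟨e, he, rfl⟩
      induction e using Sym2.ind with
      | _ a b =>
        have : c2col n s(a, b) = 0 ∨ c2col n s(a, b) = 1 := by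
          simp only [c2col, Sym2.lift_mk]
          match a, b with
          | none, none => simp [g2fun]
          | none, some j => have := j.isLt; simp only [g2fun, spokeCol]; split <;> omega
          | some i, none => have := i.isLt; simp only [g2fun, spokeCol]; split <;> omega
          | some i, some j => simp only [g2fun]; split <;> omega
        simpa using this
    · intro x hx
      simp only [Set.mem_insert_iff, Set.mem_singleton_iff] at hx
      rcases hx with rfl | rfl
      · refine ⟨s(none, some ⟨0, by omega⟩), (wheelGraph n).mem_edgeSet.mpr (wheel_adj_hub _), ?_⟩
        simp only [c2col, Sym2.lift_mk, g2fun, spokeCol]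
        split <;> rfl
      · refine ⟨s(some ⟨1, by omega⟩, some ⟨2, by omega⟩),
          (wheelGraph n).mem_edgeSet.mpr (wheel_adj_some.mpr
            (cycAdj_of_succ (by show 1 + 1 = 2; rfl))), ?_⟩
        rfl
  rw [himg]
  exact Set.ncard_pair (by omega)


lemma rc2_4 : (wheelGraph 4).IsRainbowConnecting (c2col 4) :=
  rc_of_Q _ (by decide)

lemma rc2_5 : (wheelGraph 5).IsRainbowConnecting (c2col 5) :=
  rc_of_Q _ (by decide)

lemma rc2_6 : (wheelGraph 6).IsRainbowConnecting (c2col 6) :=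
  rc_of_Q _ (by decide)

lemma rc1_3 : (wheelGraph 3).IsRainbowConnecting (fun _ => 0) := by
  have hQ : ∀ u v : Option (Fin 3), u ≠ v → (wheelGraph 3).Adj u v := by decide
  intro u v huv
  exact rb_of_adj _ (hQ u v huv)

lemma image1 : ((fun _ => 0 : Sym2 (Option (Fin 3)) → ℕ) '' (wheelGraph 3).edgeSet).ncard = 1 := by
  have himg : (fun _ => 0 : Sym2 (Option (Fin 3)) → ℕ) '' (wheelGraph 3).edgeSet = {0} := by
    apply Set.Subset.antisymm
    · rintro x ⟨e, he, rfl⟩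
      rfl
    · intro x hx
      simp only [Set.mem_singleton_iff] at hx
      subst hx
      exact ⟨s(none, some ⟨0, by omega⟩), (wheelGraph 3).mem_edgeSet.mpr (wheel_adj_hub _), rfl⟩
  rw [himg]
  exact Set.ncard_singleton _

theorem stmt_19 (n : ℕ) (hn : 3 ≤ n) :
    (n = 3 → (wheelGraph n).rcNumber = 1) ∧
    (4 ≤ n → n ≤ 6 → (wheelGraph n).rcNumber = 2) ∧
    (7 ≤ n → (wheelGraph n).rcNumber = 3) := by
  refine ⟨?_, ?_, ?_⟩
  · rintro rfl
    have hmem : (1 : ℕ) ∈ {m : ℕ | ∃ c : Sym2 (Option (Fin 3)) → ℕ,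
        (wheelGraph 3).IsRainbowConnecting c ∧ (c '' (wheelGraph 3).edgeSet).ncard = m} :=
      ⟨fun _ => 0, rc1_3, image1⟩
    refine le_antisymm (Nat.sInf_le hmem) ?_
    obtain ⟨c, hc, hcard⟩ := Nat.sInf_mem (⟨1, hmem⟩ : Set.Nonempty _)
    unfold SimpleGraph.rcNumber
    rw [← hcard]
    exact lb_one (by omega) c
  · intro h4 h6
    have hrc : (wheelGraph n).IsRainbowConnecting (c2col n) := by
      interval_cases n
      · exact rc2_4
      · exact rc2_5
      · exact rc2_6
    have hmem : (2 : ℕ) ∈ {m : ℕ | ∃ c : Sym2 (Option (Fin n)) → ℕ,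
        (wheelGraph n).IsRainbowConnecting c ∧ (c '' (wheelGraph n).edgeSet).ncard = m} :=
      ⟨c2col n, hrc, image2 h4 h6⟩
    refine le_antisymm (Nat.sInf_le hmem) ?_
    obtain ⟨c, hc, hcard⟩ := Nat.sInf_mem (⟨2, hmem⟩ : Set.Nonempty _)
    unfold SimpleGraph.rcNumber
    rw [← hcard]
    exact lb_two h4 hc
  · intro h7
    have hmem : (3 : ℕ) ∈ {m : ℕ | ∃ c : Sym2 (Option (Fin n)) → ℕ,
        (wheelGraph n).IsRainbowConnecting c ∧ (c '' (wheelGraph n).edgeSet).ncard = m} :=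
      ⟨c3col n, rc3 h7, image3 h7⟩
    refine le_antisymm (Nat.sInf_le hmem) ?_
    obtain ⟨c, hc, hcard⟩ := Nat.sInf_mem (⟨3, hmem⟩ : Set.Nonempty _)
    unfold SimpleGraph.rcNumber
    rw [← hcard]
    exact lb_three h7 hc
end
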